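/- Let L : ℂ → ℂ be an invertible real-linear map and let S(z) = cz with c ∈ ℂ, c ∉ ℝ (so in particular c ≠ ±1). If L ∘ S ∘ L⁻¹ equals multiplication by some complex number c', then c' = c or c' = conj(c), and L is complex-linear or complex-antilinear respectively. -/

import Mathlib

/-!
Every real-linear map of `ℂ` has the form `z ↦ a z + b z̄`, and `a`, `b` are unique. Conjugating
multiplication by `c` into multiplication by `c'` then forces `a (c - c') = 0` and
`b (c̄ - c') = 0`. Since `c ≠ c̄`, at most one of `a`, `b` is nonzero, and invertibility of `L`
makes exactly one nonzero: `a ≠ 0` gives `c' = c` and `L z = a z`, while `b ≠ 0` gives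
`c' = c̄` and `L z = b z̄`.
-/

open Complex ComplexConjugate

namespace Complex

theorem real_linearMap_apply_eq_re_smul_add_im_smul {M : Type*} [AddCommGroup M] [Module ℝ M] (f : ℂ →ₗ[ℝ] M) (z : ℂ) :
    f z = z.re • f 1 + z.im • f I := by
  conv_lhs => rw [← re_add_im z, ← mul_one (z.re : ℂ), ← real_smul, ← real_smul]
  rw [map_add, map_smul, map_smul]

theorem exists_eq_mul_add_mul_conj (f : ℂ →ₗ[ℝ] ℂ) :
    ∃ a b : ℂ, ∀ z, f z = a * z + b * conj z := by
  refine ⟨(f 1 - I * f I) / 2, (f 1 + I * f I) / 2, fun z => ?_⟩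
  rw [real_linearMap_apply_eq_re_smul_add_im_smul f z, real_smul, real_smul]
  conv_rhs => rw [← re_add_im z]
  simp only [map_add, map_mul, conj_ofReal, conj_I]
  linear_combination ((z.im : ℂ) * f I) * I_sq

theorem eq_zero_of_mul_add_mul_conj_eq_zero {a b : ℂ} (h : ∀ z, a * z + b * conj z = 0) :
    a = 0 ∧ b = 0 := by
  have h1 := h 1
  have hI := h I
  simp only [map_one, conj_I, mul_one, mul_neg] at h1 hI
  have ha : a = 0 := by simpa using (by linear_combination (h1 * I + hI) / 2 : a * I = 0)
  exact ⟨ha, by linear_combination h1 - ha⟩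

end Complex

/-- If L conjugates multiplication by a non-real c to multiplication by c', then
either c' = c and L is complex-linear, or c' = conj c and L is complex-antilinear. -/
theorem conjugated_multiplier_is_c_or_conj (L : ℂ ≃ₗ[ℝ] ℂ) (c : ℂ) (hc : c.im ≠ 0)
    (c' : ℂ) (hconj : ∀ z : ℂ, L (c * L.symm z) = c' * z) :
    (c' = c ∧ ∀ (a : ℂ) (z : ℂ), L (a * z) = a * L z) ∨
    (c' = (starRingEnd ℂ) c ∧ ∀ (a : ℂ) (z : ℂ), L (a * z) = (starRingEnd ℂ) a * L z) := by
  have hmul : ∀ z, L (c * z) = c' * L z := fun z => by simpa using hconj (L z)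
  obtain ⟨a, b, hL⟩ := exists_eq_mul_add_mul_conj L.toLinearMap
  simp only [LinearEquiv.coe_coe] at hL
  obtain ⟨ha, hb⟩ : a * (c - c') = 0 ∧ b * (conj c - c') = 0 :=
    eq_zero_of_mul_add_mul_conj_eq_zero fun z => by
      have := hmul z
      rw [hL, hL, map_mul] at this
      linear_combination this
  have hconj_sub : conj c - c ≠ 0 := sub_ne_zero.mpr (mt conj_eq_iff_im.mp hc)
  rcases eq_or_ne a 0 with rfl | ha0
  · have hb0 : b ≠ 0 := by
      rintro rfl
      exact one_ne_zero (L.injective (by simp [hL]))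
    have hc' : c' = conj c := (sub_eq_zero.mp ((mul_eq_zero.mp hb).resolve_left hb0)).symm
    exact Or.inr ⟨hc', fun w z => by simp only [hL, map_mul]; ring⟩
  · have hc' : c' = c := (sub_eq_zero.mp ((mul_eq_zero.mp ha).resolve_left ha0)).symm
    obtain rfl : b = 0 := by simpa [hc', hconj_sub] using hb
    exact Or.inl ⟨hc', fun w z => by simp only [hL]; ring⟩
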